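/- arXiv:1603.03124 — 6 statements merged into one kernel-verified Lean document; each statement's English description precedes it below -/
import Mathlib

section
/- Let x : [0,∞) → ℝ² be continuous with respect to the tree-metric ρ, and suppose 0 ≤ t₁ ≤ t₂ are such that ‖x(t)‖ ≠ 0 holds for all t ∈ [t₁,t₂]. Then the normalized position is constant on this interval: x(t)/‖x(t)‖ = x(t₁)/‖x(t₁)‖ for every t ∈ [t₁,t₂]. -/
open scoped Classical

/-- Two points of the plane lie on the same ray emanating from the origin. -/
def OnSameRay (x y : EuclideanSpace ℝ (Fin 2)) : Prop :=
  x = 0 ∨ y = 0 ∨ ∃ t : ℝ, 0 < t ∧ y = t • x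

/-- The tree-metric on the plane. -/
noncomputable def treeDist (x y : EuclideanSpace ℝ (Fin 2)) : ℝ :=
  if OnSameRay x y then |‖x‖ - ‖y‖| else ‖x‖ + ‖y‖

/-!
A point at tree-distance less than `‖y‖` from `y ≠ 0` lies on the ray through `y`, since points
on different rays are at tree-distance `‖x‖ + ‖y‖`. Hence along a tree-continuous path avoiding
the origin the direction `x(t)/‖x(t)‖` is locally constant, and so constant on the connected
interval `[t₁, t₂]`.
-/

open Filter Set Topology

theorem IsPreconnected.apply_eq_of_eventually_eq {X Y : Type*} [TopologicalSpace X] {s : Set X}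
    (hs : IsPreconnected s) {f : X → Y} (hf : ∀ x ∈ s, ∀ᶠ y in 𝓝[s] x, f y = f x)
    {a b : X} (ha : a ∈ s) (hb : b ∈ s) : f a = f b := by
  have := isPreconnected_iff_preconnectedSpace.mp hs
  have hloc : IsLocallyConstant (s.domRestrict f) :=
    (IsLocallyConstant.iff_eventually_eq _).2 fun x =>
      (eventually_nhds_subtype_iff s x fun y => f y = f x).2 (hf x x.2)
  exact hloc.apply_eq_of_preconnectedSpace ⟨a, ha⟩ ⟨b, hb⟩

theorem OnSameRay.sameRay {x y : EuclideanSpace ℝ (Fin 2)} (h : OnSameRay x y) :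
    SameRay ℝ x y := by
  rcases h with rfl | rfl | ⟨t, ht, rfl⟩
  · exact SameRay.zero_left _
  · exact SameRay.zero_right _
  · exact SameRay.sameRay_pos_smul_right x ht

theorem onSameRay_of_treeDist_lt_norm {x y : EuclideanSpace ℝ (Fin 2)} (h : treeDist x y < ‖y‖) :
    OnSameRay x y := by
  by_contra hxy
  rw [treeDist, if_neg hxy] at h
  linarith [norm_nonneg x]

theorem eventually_onSameRay_of_treeContinuousAt {x : ℝ → EuclideanSpace ℝ (Fin 2)} {t : ℝ}
    (hcont : ∀ ε > (0:ℝ), ∃ δ > (0:ℝ), ∀ s : ℝ, 0 ≤ s → |s - t| < δ → treeDist (x s) (x t) < ε)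
    (hxt : x t ≠ 0) : ∀ᶠ s in 𝓝[Ici 0] t, OnSameRay (x s) (x t) := by
  obtain ⟨δ, hδ, hclose⟩ := hcont ‖x t‖ (norm_pos_iff.2 hxt)
  rw [eventually_nhdsWithin_iff, Metric.eventually_nhds_iff]
  exact ⟨δ, hδ, fun s hst hs => onSameRay_of_treeDist_lt_norm (hclose s hs hst)⟩

theorem constant_ray_of_treeContinuous_general (x : ℝ → EuclideanSpace ℝ (Fin 2))
    (hcont : ∀ t : ℝ, 0 ≤ t → ∀ ε > (0:ℝ), ∃ δ > (0:ℝ),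
      ∀ s : ℝ, 0 ≤ s → |s - t| < δ → treeDist (x s) (x t) < ε)
    (t₁ t₂ : ℝ) (ht₁ : 0 ≤ t₁)
    (hne : ∀ t ∈ Set.Icc t₁ t₂, ‖x t‖ ≠ 0) :
    ∀ t ∈ Set.Icc t₁ t₂, ‖x t‖⁻¹ • x t = ‖x t₁‖⁻¹ • x t₁ := by
  have hx : ∀ s ∈ Icc t₁ t₂, x s ≠ 0 := fun s hs => norm_ne_zero_iff.1 (hne s hs)
  have hsub : Icc t₁ t₂ ⊆ Ici 0 := fun s hs => ht₁.trans hs.1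
  intro t ht
  refine isPreconnected_Icc.apply_eq_of_eventually_eq (f := fun s => ‖x s‖⁻¹ • x s)
    (fun s hs => ?_) ht ⟨le_rfl, ht.1.trans ht.2⟩
  have hray := nhdsWithin_mono s hsub (eventually_onSameRay_of_treeContinuousAt
    (hcont s (hsub hs)) (hx s hs))
  filter_upwards [hray, self_mem_nhdsWithin] with r hrs hr
  exact hrs.sameRay.inv_norm_smul_eq (hx r hr) (hx s hs)

/-- A path `x : [0,∞) → ℝ²` that is continuous with respect to the tree-metric and
does not visit the origin on `[t₁,t₂]` has constant normalized position there. -/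
theorem constant_ray_of_treeContinuous (x : ℝ → EuclideanSpace ℝ (Fin 2))
    (hcont : ∀ t : ℝ, 0 ≤ t → ∀ ε > (0:ℝ), ∃ δ > (0:ℝ),
      ∀ s : ℝ, 0 ≤ s → |s - t| < δ → treeDist (x s) (x t) < ε)
    (t₁ t₂ : ℝ) (ht₁ : 0 ≤ t₁) (ht₁₂ : t₁ ≤ t₂)
    (hne : ∀ t ∈ Set.Icc t₁ t₂, ‖x t‖ ≠ 0) :
    ∀ t ∈ Set.Icc t₁ t₂, ‖x t‖⁻¹ • x t = ‖x t₁‖⁻¹ • x t₁ :=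
  constant_ray_of_treeContinuous_general x hcont t₁ t₂ ht₁ hne
end

section
/- Let g : ℝ² → ℝ satisfy: for every θ ∈ [0,2π) the function r ↦ g_θ(r) is differentiable on [0,∞) and its derivative g′_θ satisfies g′_θ(r) = g′_θ(0) + ∫₀^r g″_θ(y) dy for some locally Lebesgue-integrable function g″_θ on [0,∞); the function θ ↦ g′_θ(0) is bounded on [0,2π); and there exist η > 0 and a Lebesgue-integrable function c : (0,η] → [0,∞) such that |g″_θ(r)| ≤ c(r) for all θ ∈ [0,2π) and r ∈ (0,η]. Then g is continuous with respect to the tree-metric ρ (in particular, g(x) → g(0) as ρ(x,0) → 0). -/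
open MeasureTheory
open scoped Classical

/-- The point of the plane with polar coordinates `(r, θ)`. -/
noncomputable def polar (r θ : ℝ) : EuclideanSpace ℝ (Fin 2) :=
  (WithLp.equiv 2 (Fin 2 → ℝ)).symm ![r * Real.cos θ, r * Real.sin θ]

/-!
Near a point `x ≠ 0` the tree-metric only sees the ray through `x`, so there tree-continuity
is continuity of `g` along that ray. At the origin every ray matters: bounding the radial
derivative by `|g'_θ(0)| + ∫₀^η c` uniformly in `θ`, the mean value theorem makes `g` radially
Lipschitz at `0` with a constant independent of the ray.
-/

open Set

def TreeContinuousAt (g : EuclideanSpace ℝ (Fin 2) → ℝ) (x : EuclideanSpace ℝ (Fin 2)) : Prop :=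
  ∀ ε > (0:ℝ), ∃ δ > (0:ℝ), ∀ y, treeDist x y < δ → |g y - g x| < ε

lemma polar_zero (θ : ℝ) : polar 0 θ = 0 := by
  ext i
  fin_cases i <;> simp [polar]

lemma smul_polar (t r θ : ℝ) : t • polar r θ = polar (t * r) θ := by
  ext i
  fin_cases i <;> simp [polar] <;> ring

lemma polar_add_int_mul_two_pi (r θ : ℝ) (n : ℤ) : polar r (θ + n * (2 * Real.pi)) = polar r θ := by
  simp [polar, Real.cos_add_int_mul_two_pi, Real.sin_add_int_mul_two_pi]

lemma exists_mem_Ico_eq_polar (x : EuclideanSpace ℝ (Fin 2)) :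
    ∃ θ ∈ Ico 0 (2 * Real.pi), x = polar ‖x‖ θ := by
  set z : ℂ := Complex.orthonormalBasisOneI.repr.symm x
  have hz : ‖z‖ = ‖x‖ := LinearIsometryEquiv.norm_map _ x
  have hx : x = polar ‖x‖ (Complex.arg z) := by
    ext i
    fin_cases i <;> simp [polar, z, ← hz]
  refine ⟨toIcoMod Real.two_pi_pos 0 z.arg, toIcoMod_mem_Ico' _ _, ?_⟩
  rw [← self_sub_toIcoDiv_zsmul, zsmul_eq_mul, sub_eq_add_neg, ← neg_mul, ← Int.cast_neg,
    polar_add_int_mul_two_pi, ← hx]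

lemma treeDist_zero_left (y : EuclideanSpace ℝ (Fin 2)) : treeDist 0 y = ‖y‖ := by
  simp [treeDist, OnSameRay]

lemma treeDist_smul_right (x : EuclideanSpace ℝ (Fin 2)) {t : ℝ} (ht : 0 < t) :
    treeDist x (t • x) = |‖x‖ - t * ‖x‖| := by
  have hray : OnSameRay x (t • x) := Or.inr (Or.inr ⟨t, ht, rfl⟩)
  rw [treeDist, if_pos hray, norm_smul, Real.norm_of_nonneg ht.le]

lemma exists_pos_smul_of_treeDist_lt_norm {x y : EuclideanSpace ℝ (Fin 2)}
    (h : treeDist x y < ‖x‖) : ∃ t : ℝ, 0 < t ∧ y = t • x := by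
  by_cases hray : OnSameRay x y
  · rw [treeDist, if_pos hray] at h
    rcases hray with rfl | rfl | ht
    · simpa using (abs_nonneg _).trans_lt h
    · simp at h
    · exact ht
  · rw [treeDist, if_neg hray] at h
    linarith [norm_nonneg y]

lemma treeContinuousAt_of_ne_zero {g : EuclideanSpace ℝ (Fin 2) → ℝ}
    {x : EuclideanSpace ℝ (Fin 2)} {θ : ℝ} (hx : x ≠ 0) (hxθ : x = polar ‖x‖ θ)
    (hg : ContinuousWithinAt (fun r => g (polar r θ)) (Ici 0) ‖x‖) : TreeContinuousAt g x := by
  intro ε hε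
  obtain ⟨δ, hδ, hgδ⟩ := Metric.continuousWithinAt_iff.1 hg ε hε
  refine ⟨min δ ‖x‖, lt_min hδ (norm_pos_iff.2 hx), fun y hy => ?_⟩
  obtain ⟨t, ht, rfl⟩ := exists_pos_smul_of_treeDist_lt_norm (hy.trans_le (min_le_right _ _))
  have hpolar : t • x = polar (t * ‖x‖) θ := by
    nth_rw 1 [hxθ]
    exact smul_polar t ‖x‖ θ
  have hdist : dist (t * ‖x‖) ‖x‖ < δ := by
    rw [Real.dist_eq, abs_sub_comm, ← treeDist_smul_right x ht]
    exact hy.trans_le (min_le_left _ _)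
  have := hgδ (mem_Ici.2 (by positivity)) hdist
  rwa [Real.dist_eq, ← hpolar, ← hxθ] at this

lemma treeContinuousAt_zero_of_radial_lipschitz {g : EuclideanSpace ℝ (Fin 2) → ℝ} {η M : ℝ}
    (hη : 0 < η)
    (hg : ∀ θ ∈ Ico 0 (2 * Real.pi), ∀ r ∈ Icc 0 η, |g (polar r θ) - g 0| ≤ M * r) :
    TreeContinuousAt g 0 := by
  intro ε hε
  refine ⟨min η (ε / (|M| + 1)), by positivity, fun y hy => ?_⟩
  rw [treeDist_zero_left, lt_min_iff, lt_div_iff₀ (by positivity)] at hy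
  obtain ⟨θ, hθ, hyθ⟩ := exists_mem_Ico_eq_polar y
  have hgy := hg θ hθ ‖y‖ ⟨norm_nonneg y, hy.1.le⟩
  rw [← hyθ] at hgy
  calc |g y - g 0| ≤ M * ‖y‖ := hgy
    _ ≤ |M| * ‖y‖ := mul_le_mul_of_nonneg_right (le_abs_self M) (norm_nonneg y)
    _ < ε := by linarith [norm_nonneg y]

lemma abs_intervalIntegral_le_setIntegral_of_abs_le {f c : ℝ → ℝ} {u η : ℝ} (hu : u ∈ Icc 0 η)
    (hc : IntegrableOn c (Ioc 0 η)) (hfc : ∀ y ∈ Ioc 0 η, |f y| ≤ c y) :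
    |∫ y in (0:ℝ)..u, f y| ≤ ∫ y in Ioc 0 η, c y :=
  calc |∫ y in (0:ℝ)..u, f y| ≤ ∫ y in (0:ℝ)..u, c y := by
        rw [← Real.norm_eq_abs]
        exact intervalIntegral.norm_integral_le_of_norm_le hu.1
            (ae_of_all _ fun y hy => hfc y ⟨hy.1, hy.2.trans hu.2⟩)
            ((intervalIntegrable_iff_integrableOn_Ioc_of_le hu.1).2
              (hc.mono_set (Ioc_subset_Ioc_right hu.2)))
    _ = ∫ y in Ioc 0 u, c y := intervalIntegral.integral_of_le hu.1
    _ ≤ ∫ y in Ioc 0 η, c y :=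
        setIntegral_mono_set hc
          ((ae_restrict_iff' measurableSet_Ioc).2
            (ae_of_all _ fun y hy => (abs_nonneg _).trans (hfc y hy)))
          (Ioc_subset_Ioc_right hu.2).eventuallyLE

lemma abs_sub_le_mul_of_deriv_eq_add_integral {f f' f'' c : ℝ → ℝ} {C η r : ℝ}
    (hf : ∀ u, 0 ≤ u → HasDerivWithinAt f (f' u) (Ici 0) u)
    (hf' : ∀ u, 0 ≤ u → f' u = f' 0 + ∫ y in (0:ℝ)..u, f'' y) (hC : |f' 0| ≤ C)
    (hc : IntegrableOn c (Ioc 0 η)) (hf''c : ∀ y ∈ Ioc 0 η, |f'' y| ≤ c y) (hr : r ∈ Icc 0 η) :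
    |f r - f 0| ≤ (C + ∫ y in Ioc 0 η, c y) * r := by
  have hf'_le : ∀ u ∈ Icc 0 η, |f' u| ≤ C + ∫ y in Ioc 0 η, c y := fun u hu => by
    rw [hf' u hu.1]
    exact (abs_add_le _ _).trans
      (add_le_add hC (abs_intervalIntegral_le_setIntegral_of_abs_le hu hc hf''c))
  simpa using norm_image_sub_le_of_norm_deriv_le_segment'
    (fun u hu => (hf u hu.1).mono Icc_subset_Ici_self)
    (fun u hu => hf'_le u ⟨hu.1, hu.2.le.trans hr.2⟩) r (right_mem_Icc.2 hr.1)

theorem treeContinuous_of_classD_general (g : EuclideanSpace ℝ (Fin 2) → ℝ)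
    (g' g'' : ℝ → ℝ → ℝ)
    (hderiv : ∀ θ ∈ Set.Ico (0:ℝ) (2 * Real.pi), ∀ r : ℝ, 0 ≤ r →
      HasDerivWithinAt (fun u => g (polar u θ)) (g' θ r) (Set.Ici 0) r)
    (hftc : ∀ θ ∈ Set.Ico (0:ℝ) (2 * Real.pi), ∀ r : ℝ, 0 ≤ r →
      g' θ r = g' θ 0 + ∫ y in (0:ℝ)..r, g'' θ y)
    (hbdd : ∃ C : ℝ, ∀ θ ∈ Set.Ico (0:ℝ) (2 * Real.pi), |g' θ 0| ≤ C)
    (η : ℝ) (hη : 0 < η) (c : ℝ → ℝ)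
    (hcint : IntegrableOn c (Set.Ioc 0 η))
    (hcdom : ∀ θ ∈ Set.Ico (0:ℝ) (2 * Real.pi), ∀ r ∈ Set.Ioc (0:ℝ) η,
      |g'' θ r| ≤ c r) :
    ∀ x : EuclideanSpace ℝ (Fin 2), ∀ ε > (0:ℝ), ∃ δ > (0:ℝ),
      ∀ y : EuclideanSpace ℝ (Fin 2), treeDist x y < δ → |g y - g x| < ε := by
  obtain ⟨C, hC⟩ := hbdd
  intro x
  rcases eq_or_ne x 0 with rfl | hx
  · refine treeContinuousAt_zero_of_radial_lipschitz (M := C + ∫ y in Ioc 0 η, c y) hη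
      fun θ hθ r hr => ?_
    rw [← polar_zero θ]
    exact abs_sub_le_mul_of_deriv_eq_add_integral (hderiv θ hθ) (hftc θ hθ) (hC θ hθ) hcint
      (hcdom θ hθ) hr
  · obtain ⟨θ, hθ, hxθ⟩ := exists_mem_Ico_eq_polar x
    exact treeContinuousAt_of_ne_zero hx hxθ (hderiv θ hθ ‖x‖ (norm_nonneg x)).continuousWithinAt

/-- A function `g : ℝ² → ℝ` which is, along each ray, differentiable with an absolutely
continuous derivative, whose radial derivatives at the origin are bounded in the angle,
and whose second radial derivatives are dominated near the origin by an integrable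
function of the radius, is continuous with respect to the tree-metric. -/
theorem treeContinuous_of_classD (g : EuclideanSpace ℝ (Fin 2) → ℝ)
    (g' g'' : ℝ → ℝ → ℝ)
    (hderiv : ∀ θ ∈ Set.Ico (0:ℝ) (2 * Real.pi), ∀ r : ℝ, 0 ≤ r →
      HasDerivWithinAt (fun u => g (polar u θ)) (g' θ r) (Set.Ici 0) r)
    (hloc : ∀ θ ∈ Set.Ico (0:ℝ) (2 * Real.pi), ∀ R : ℝ, 0 ≤ R →
      IntegrableOn (g'' θ) (Set.Icc 0 R))
    (hftc : ∀ θ ∈ Set.Ico (0:ℝ) (2 * Real.pi), ∀ r : ℝ, 0 ≤ r →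
      g' θ r = g' θ 0 + ∫ y in (0:ℝ)..r, g'' θ y)
    (hbdd : ∃ C : ℝ, ∀ θ ∈ Set.Ico (0:ℝ) (2 * Real.pi), |g' θ 0| ≤ C)
    (η : ℝ) (hη : 0 < η) (c : ℝ → ℝ)
    (hc0 : ∀ y ∈ Set.Ioc (0:ℝ) η, 0 ≤ c y)
    (hcint : IntegrableOn c (Set.Ioc 0 η))
    (hcdom : ∀ θ ∈ Set.Ico (0:ℝ) (2 * Real.pi), ∀ r ∈ Set.Ioc (0:ℝ) η,
      |g'' θ r| ≤ c r) :
    ∀ x : EuclideanSpace ℝ (Fin 2), ∀ ε > (0:ℝ), ∃ δ > (0:ℝ),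
      ∀ y : EuclideanSpace ℝ (Fin 2), treeDist x y < δ → |g y - g x| < ε :=
  treeContinuous_of_classD_general g g' g'' hderiv hftc hbdd η hη c hcint hcdom
end

section
/- For every constant c ≥ U(0): the defining infimum for U⁽ᶜ⁾ is taken over a nonempty family; U⁽ᶜ⁾ is itself p-concave; U⁽ᶜ⁾ is continuous on [0,1]; U⁽ᶜ⁾(r) ≥ U(r) for all r ∈ [0,1]; U⁽ᶜ⁾(0) = c; and U⁽ᶜ⁾(1) = U(1). -/
open scoped Classical

/-- A function `φ : [0,1] → ℝ` is `p`-concave if `φ = ψ ∘ p` on `[0,1]` for some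
continuous concave function `ψ : [0, p(1)] → ℝ`. -/
def PConcave (p φ : ℝ → ℝ) : Prop :=
  ∃ ψ : ℝ → ℝ, ContinuousOn ψ (Set.Icc 0 (p 1)) ∧ ConcaveOn ℝ (Set.Icc 0 (p 1)) ψ ∧
    ∀ r ∈ Set.Icc (0:ℝ) 1, φ r = ψ (p r)

/-- `U⁽ᶜ⁾(r)`: the pointwise infimum over all `p`-concave majorants `φ` of `U` on `[0,1]`
with `φ(0) ≥ c`. -/
noncomputable def Uc (p U : ℝ → ℝ) (c r : ℝ) : ℝ :=
  sInf {y : ℝ | ∃ φ : ℝ → ℝ, PConcave p φ ∧ (∀ t ∈ Set.Icc (0:ℝ) 1, U t ≤ φ t) ∧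
    c ≤ φ 0 ∧ y = φ r}

/-!
In the coordinate `x = p t`, `U⁽ᶜ⁾` is `E ∘ p`, where `E = concaveEnvelope p U c` is the
pointwise infimum of the continuous concave functions `ψ` on `[0, p 1]` with `U ≤ ψ ∘ p` and
`ψ 0 ≥ c`. Each such `ψ` is at least `min c (U 1)`, so `E` is a well-defined concave function;
as an infimum of continuous functions it is upper semicontinuous, and a concave upper
semicontinuous function on a compact interval is continuous, since at the endpoints it lies
above its chord. The endpoint values `E 0 = c` and `E (p 1) = U 1` are approached by the affine
majorants `x ↦ c + ε + K x` and `x ↦ U 1 + ε + K (p 1 - x)`, which exist for large `K` by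
continuity of `U` and compactness of `[0, 1]`.
-/

open Set Filter Topology

theorem eventually_forall_le_add_mul {X : Type*} [TopologicalSpace X] {s : Set X}
    (hs : IsCompact s) {U d : X → ℝ} (hU : ContinuousOn U s) (hd : ContinuousOn d s)
    {a : X} (ha : a ∈ s) (hd_nonneg : ∀ t ∈ s, 0 ≤ d t) (hd_pos : ∀ t ∈ s, t ≠ a → 0 < d t)
    {ε : ℝ} (hε : 0 < ε) : ∀ᶠ K in atTop, ∀ t ∈ s, U t ≤ U a + ε + K * d t := by
  obtain ⟨M, hM⟩ := hs.bddAbove_image hU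
  obtain ⟨O, hO, haO, hOs⟩ := mem_nhdsWithin.1 <|
    (hU a ha) (Iio_mem_nhds (lt_add_of_pos_right (U a) hε))
  obtain ⟨m, hm, hdm⟩ := (hs.diff hO).exists_forall_le' (hd.mono sdiff_subset)
    fun t ht => hd_pos t ht.1 fun h => ht.2 (h ▸ haO)
  filter_upwards [eventually_ge_atTop 0, eventually_ge_atTop ((M - U a) / m)] with K hK0 hK t ht
  by_cases htO : t ∈ O
  · have hnear : U t < U a + ε := hOs ⟨htO, ht⟩
    nlinarith [mul_nonneg hK0 (hd_nonneg t ht)]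
  · calc U t ≤ M := hM (mem_image_of_mem U ht)
      _ = U a + (M - U a) / m * m := by field_simp; ring
      _ ≤ U a + ε + K * d t := by
        nlinarith [mul_le_mul hK (hdm t ⟨ht, htO⟩) hm.le hK0]

theorem ConcaveOn.chord_le {f : ℝ → ℝ} {a b x : ℝ} (hf : ConcaveOn ℝ (Icc a b) f) (hab : a < b)
    (hx : x ∈ Icc a b) : f a + (x - a) / (b - a) * (f b - f a) ≤ f x := by
  have hba : 0 < b - a := sub_pos.2 hab
  have hθ : 0 ≤ (x - a) / (b - a) := div_nonneg (sub_nonneg.2 hx.1) hba.le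
  have hθ' : 0 ≤ 1 - (x - a) / (b - a) := by
    rw [sub_nonneg, div_le_one hba]; linarith [hx.2]
  have hconc := hf.2 (left_mem_Icc.2 hab.le) (right_mem_Icc.2 hab.le) hθ' hθ (by ring)
  have hpt : (1 - (x - a) / (b - a)) • a + ((x - a) / (b - a)) • b = x := by
    simp only [smul_eq_mul]; field_simp; ring
  rw [hpt, smul_eq_mul, smul_eq_mul] at hconc
  linarith

theorem ConcaveOn.continuousOn_Icc_of_upperSemicontinuousOn {f : ℝ → ℝ} {a b : ℝ}
    (hf : ConcaveOn ℝ (Icc a b) f) (hab : a < b) (hu : UpperSemicontinuousOn f (Icc a b)) :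
    ContinuousOn f (Icc a b) := by
  have hend : ∀ x ∈ ({a, b} : Set ℝ), ContinuousWithinAt f (Icc a b) x := by
    intro x hx
    have hxI : x ∈ Icc a b := by
      rcases hx with rfl | rfl
      exacts [left_mem_Icc.2 hab.le, right_mem_Icc.2 hab.le]
    refine continuousWithinAt_iff_lower_upperSemicontinuousWithinAt.2 ⟨fun y hy => ?_, hu x hxI⟩
    set g : ℝ → ℝ := fun z => f a + (z - a) / (b - a) * (f b - f a)
    have hgx : g x = f x := by
      rcases hx with rfl | rfl
      · simp [g]
      · simp [g, div_self (sub_pos.2 hab).ne']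
    have hg : ∀ᶠ z in 𝓝[Icc a b] x, y < g z :=
      (by fun_prop : Continuous g).continuousWithinAt.eventually (lt_mem_nhds (hgx ▸ hy))
    filter_upwards [hg, self_mem_nhdsWithin] with z hyz hz using hyz.trans_le (hf.chord_le hab hz)
  refine hf.continuousOn_Icc hab ?_ ?_
  · exact (continuousWithinAt_Icc_iff_Ici hab).1 (hend a (by simp))
  · exact (continuousWithinAt_Icc_iff_Iic hab).1 (hend b (by simp))

theorem concaveOn_ciInf {ι E : Type*} [Nonempty ι] [AddCommGroup E] [Module ℝ E] {s : Set E}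
    {f : ι → E → ℝ} (hf : ∀ i, ConcaveOn ℝ s (f i))
    (hbdd : ∀ x ∈ s, BddBelow (range fun i => f i x)) :
    ConcaveOn ℝ s fun x => ⨅ i, f i x := by
  refine ⟨(hf (Classical.arbitrary ι)).1, fun x hx y hy α β hα hβ hαβ => le_ciInf fun i => ?_⟩
  exact (add_le_add (smul_le_smul_of_nonneg_left (ciInf_le (hbdd x hx) i) hα)
    (smul_le_smul_of_nonneg_left (ciInf_le (hbdd y hy) i) hβ)).trans ((hf i).2 hx hy hα hβ hαβ)

def concaveMajorants (p U : ℝ → ℝ) (c : ℝ) : Set (ℝ → ℝ) :=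
  {ψ | ContinuousOn ψ (Icc 0 (p 1)) ∧ ConcaveOn ℝ (Icc 0 (p 1)) ψ ∧
    (∀ t ∈ Icc (0:ℝ) 1, U t ≤ ψ (p t)) ∧ c ≤ ψ 0}

noncomputable def concaveEnvelope (p U : ℝ → ℝ) (c x : ℝ) : ℝ :=
  ⨅ ψ : concaveMajorants p U c, ψ.1 x

section concaveEnvelope

variable {p U : ℝ → ℝ} {c : ℝ}

theorem mapsTo_Icc_of_monotoneOn (hpm : MonotoneOn p (Icc 0 1)) (hp0 : p 0 = 0) :
    MapsTo p (Icc 0 1) (Icc 0 (p 1)) := fun _ ht =>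
  ⟨hp0 ▸ hpm (left_mem_Icc.2 zero_le_one) ht ht.1, hpm ht (right_mem_Icc.2 zero_le_one) ht.2⟩

theorem zero_lt_apply_one (hpm : StrictMonoOn p (Icc 0 1)) (hp0 : p 0 = 0) : 0 < p 1 :=
  hp0 ▸ hpm (left_mem_Icc.2 zero_le_one) (right_mem_Icc.2 zero_le_one) zero_lt_one

theorem pConcave_majorant_comp (hp0 : p 0 = 0) {ψ : ℝ → ℝ} (hψ : ψ ∈ concaveMajorants p U c) :
    PConcave p (ψ ∘ p) ∧ (∀ t ∈ Icc (0:ℝ) 1, U t ≤ (ψ ∘ p) t) ∧ c ≤ (ψ ∘ p) 0 :=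
  ⟨⟨ψ, hψ.1, hψ.2.1, fun _ _ => rfl⟩, hψ.2.2.1, by simpa [hp0] using hψ.2.2.2⟩

theorem Uc_eq_concaveEnvelope (hp0 : p 0 = 0) {r : ℝ} (hr : r ∈ Icc (0:ℝ) 1) :
    Uc p U c r = concaveEnvelope p U c (p r) := by
  refine congrArg sInf (Set.ext fun y => ⟨?_, ?_⟩)
  · rintro ⟨φ, ⟨ψ, hψc, hψconc, hφψ⟩, hφU, hφ0, rfl⟩
    have hψ0 : φ 0 = ψ 0 := by rw [hφψ 0 ⟨le_rfl, zero_le_one⟩, hp0]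
    exact ⟨⟨ψ, hψc, hψconc, fun t ht => hφψ t ht ▸ hφU t ht, hψ0 ▸ hφ0⟩, (hφψ r hr).symm⟩
  · rintro ⟨⟨ψ, hψ⟩, rfl⟩
    obtain ⟨hφ, hφU, hφ0⟩ := pConcave_majorant_comp hp0 hψ
    exact ⟨ψ ∘ p, hφ, hφU, hφ0, rfl⟩

theorem affine_mem_concaveMajorants {a b : ℝ} (hU : ∀ t ∈ Icc (0:ℝ) 1, U t ≤ a + b * p t)
    (hc : c ≤ a) : (fun x => a + b * x) ∈ concaveMajorants p U c := by
  refine ⟨by fun_prop, ⟨convex_Icc _ _, fun x _ y _ α β _ _ hαβ => le_of_eq ?_⟩, hU, by simpa⟩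
  simp only [smul_eq_mul]
  linear_combination a * hαβ

theorem concaveMajorants_nonempty (hU : ContinuousOn U (Icc 0 1)) :
    (concaveMajorants p U c).Nonempty := by
  obtain ⟨M, hM⟩ := isCompact_Icc.bddAbove_image hU
  exact ⟨_, affine_mem_concaveMajorants (a := max M c) (b := 0)
    (fun t ht => by simpa using (hM (mem_image_of_mem U ht)).trans (le_max_left M c))
    (le_max_right M c)⟩

theorem min_le_of_mem_concaveMajorants {ψ : ℝ → ℝ} (hψ : ψ ∈ concaveMajorants p U c) {x : ℝ}
    (hx : x ∈ Icc 0 (p 1)) : min c (U 1) ≤ ψ x := by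
  have hp1 : 0 ≤ p 1 := hx.1.trans hx.2
  exact (min_le_min hψ.2.2.2 (hψ.2.2.1 1 ⟨zero_le_one, le_rfl⟩)).trans <|
    hψ.2.1.min_le_of_mem_Icc (left_mem_Icc.2 hp1) (right_mem_Icc.2 hp1) hx

theorem bddBelow_concaveMajorants {x : ℝ} (hx : x ∈ Icc 0 (p 1)) :
    BddBelow (range fun ψ : concaveMajorants p U c => ψ.1 x) :=
  ⟨min c (U 1), by rintro _ ⟨ψ, rfl⟩; exact min_le_of_mem_concaveMajorants ψ.2 hx⟩

theorem concaveEnvelope_le {ψ : ℝ → ℝ} (hψ : ψ ∈ concaveMajorants p U c) {x : ℝ}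
    (hx : x ∈ Icc 0 (p 1)) : concaveEnvelope p U c x ≤ ψ x :=
  ciInf_le (bddBelow_concaveMajorants hx) ⟨ψ, hψ⟩

theorem le_concaveEnvelope (hU : ContinuousOn U (Icc 0 1)) {x y : ℝ}
    (h : ∀ ψ ∈ concaveMajorants p U c, y ≤ ψ x) : y ≤ concaveEnvelope p U c x :=
  have := (concaveMajorants_nonempty (p := p) (c := c) hU).to_subtype
  le_ciInf fun ψ => h ψ.1 ψ.2

theorem le_concaveEnvelope_comp (hU : ContinuousOn U (Icc 0 1)) {t : ℝ}
    (ht : t ∈ Icc (0:ℝ) 1) : U t ≤ concaveEnvelope p U c (p t) :=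
  le_concaveEnvelope hU fun _ hψ => hψ.2.2.1 t ht

theorem concaveOn_concaveEnvelope (hU : ContinuousOn U (Icc 0 1)) :
    ConcaveOn ℝ (Icc 0 (p 1)) (concaveEnvelope p U c) :=
  have := (concaveMajorants_nonempty (p := p) (c := c) hU).to_subtype
  concaveOn_ciInf (fun ψ => ψ.2.2.1) fun _ hx => bddBelow_concaveMajorants hx

theorem continuousOn_concaveEnvelope (hU : ContinuousOn U (Icc 0 1)) (hp1 : 0 < p 1) :
    ContinuousOn (concaveEnvelope p U c) (Icc 0 (p 1)) :=
  (concaveOn_concaveEnvelope hU).continuousOn_Icc_of_upperSemicontinuousOn hp1 <|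
    upperSemicontinuousOn_ciInf (fun _ hx => bddBelow_concaveMajorants hx)
      fun ψ => ψ.2.1.upperSemicontinuousOn

theorem concaveEnvelope_zero (hpc : ContinuousOn p (Icc 0 1))
    (hpm : StrictMonoOn p (Icc 0 1)) (hp0 : p 0 = 0) (hU : ContinuousOn U (Icc 0 1))
    (hc : U 0 ≤ c) : concaveEnvelope p U c 0 = c := by
  refine le_antisymm (le_of_forall_pos_le_add fun ε hε => ?_)
    (le_concaveEnvelope hU fun _ hψ => hψ.2.2.2)
  obtain ⟨K, hK⟩ := (eventually_forall_le_add_mul isCompact_Icc hU hpc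
    (left_mem_Icc.2 zero_le_one) (fun t ht => (mapsTo_Icc_of_monotoneOn hpm.monotoneOn hp0 ht).1)
    (fun t ht hne => hp0 ▸ hpm (left_mem_Icc.2 zero_le_one) ht (ht.1.lt_of_ne' hne)) hε).exists
  have hψ := affine_mem_concaveMajorants (p := p) (U := U) (c := c) (a := c + ε) (b := K)
    (fun t ht => by linarith [hK t ht]) (by linarith)
  simpa using concaveEnvelope_le hψ (left_mem_Icc.2 (zero_lt_apply_one hpm hp0).le)

theorem concaveEnvelope_apply_one (hpc : ContinuousOn p (Icc 0 1))
    (hpm : StrictMonoOn p (Icc 0 1)) (hp0 : p 0 = 0) (hU : ContinuousOn U (Icc 0 1)) :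
    concaveEnvelope p U c (p 1) = U 1 := by
  have hp1 := zero_lt_apply_one hpm hp0
  refine le_antisymm (le_of_forall_pos_le_add fun ε hε => ?_)
    (le_concaveEnvelope_comp hU (right_mem_Icc.2 zero_le_one))
  obtain ⟨K, hK, hKc⟩ := ((eventually_forall_le_add_mul (d := fun t => p 1 - p t)
    isCompact_Icc hU (continuousOn_const.sub hpc) (right_mem_Icc.2 zero_le_one)
    (fun t ht => sub_nonneg.2 (mapsTo_Icc_of_monotoneOn hpm.monotoneOn hp0 ht).2)
    (fun t ht hne => sub_pos.2 (hpm ht (right_mem_Icc.2 zero_le_one) (ht.2.lt_of_ne hne))) hε).and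
    (eventually_ge_atTop ((c - U 1) / p 1))).exists
  have hψ := affine_mem_concaveMajorants (p := p) (U := U) (c := c)
    (a := U 1 + ε + K * p 1) (b := -K)
    (fun t ht => by linarith [hK t ht]) (by linarith [(div_le_iff₀ hp1).1 hKc])
  have := concaveEnvelope_le hψ (right_mem_Icc.2 hp1.le)
  linarith

end concaveEnvelope

/-- For every `c ≥ U(0)`: the family defining `U⁽ᶜ⁾` is nonempty, `U⁽ᶜ⁾` is itself
`p`-concave, continuous on `[0,1]`, majorizes `U`, and satisfies `U⁽ᶜ⁾(0) = c` and
`U⁽ᶜ⁾(1) = U(1)`. -/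
theorem Uc_basic_properties (p U : ℝ → ℝ)
    (hpc : ContinuousOn p (Set.Icc 0 1)) (hpm : StrictMonoOn p (Set.Icc 0 1))
    (hp0 : p 0 = 0)
    (hU : ContinuousOn U (Set.Icc 0 1))
    (c : ℝ) (hc : U 0 ≤ c) :
    (∃ φ : ℝ → ℝ, PConcave p φ ∧ (∀ t ∈ Set.Icc (0:ℝ) 1, U t ≤ φ t) ∧ c ≤ φ 0) ∧
    PConcave p (Uc p U c) ∧
    ContinuousOn (Uc p U c) (Set.Icc 0 1) ∧
    (∀ r ∈ Set.Icc (0:ℝ) 1, U r ≤ Uc p U c r) ∧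
    Uc p U c 0 = c ∧
    Uc p U c 1 = U 1 := by
  have hUc : ∀ r ∈ Icc (0:ℝ) 1, Uc p U c r = concaveEnvelope p U c (p r) :=
    fun r hr => Uc_eq_concaveEnvelope hp0 hr
  obtain ⟨ψ, hψ⟩ := concaveMajorants_nonempty (p := p) (c := c) hU
  have hcont := continuousOn_concaveEnvelope (c := c) hU (zero_lt_apply_one hpm hp0)
  refine ⟨⟨ψ ∘ p, pConcave_majorant_comp hp0 hψ⟩,
    ⟨concaveEnvelope p U c, hcont, concaveOn_concaveEnvelope hU, hUc⟩,
    (hcont.comp hpc (mapsTo_Icc_of_monotoneOn hpm.monotoneOn hp0)).congr hUc,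
    fun r hr => hUc r hr ▸ le_concaveEnvelope_comp hU hr, ?_, ?_⟩
  · rw [hUc 0 (left_mem_Icc.2 zero_le_one), hp0, concaveEnvelope_zero hpc hpm hp0 hU hc]
  · rw [hUc 1 (right_mem_Icc.2 zero_le_one), concaveEnvelope_apply_one hpc hpm hp0 hU]
end

section
/- For every c ≥ U(0) the limit D_p(c) := lim_{r↓0} (U⁽ᶜ⁾(r) − c)/p(r) exists in ℝ ∪ {+∞} (the difference quotient is nonincreasing in r by p-concavity, and is bounded below by −(c + sup_{[0,1]}|U|)/p(1)). Moreover: D_p(c) is finite for every c > U(0); the map c ↦ D_p(c) is strictly decreasing on [U(0),∞), i.e. D_p(c₂) < D_p(c₁) whenever U(0) ≤ c₁ < c₂; and this map is continuous on [U(0),∞) as a function with values in ℝ ∪ {+∞}. -/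
open scoped Classical

/-!
Concavity of `ψ` along the chord from `0` to `p(s)` makes the difference quotient
`(U⁽ᶜ⁾(r) − c)/p(r)` nonincreasing in `r`, so `D_p(c)` is its supremum over `r ∈ (0,1)`.
Adding the `p`-affine function `(c₂ − c₁)(1 − p/p(1))` to a majorant for `c₁` gives one for
`c₂`, so raising `c` by `d` lowers every quotient by at least `d/p(1)`; this gives strict
monotonicity. Convex combinations of majorants are majorants, so `U⁽ᶜ⁾(r)` and the quotients
are convex in `c`. Hence `D_p` is lower semicontinuous, as a supremum of continuous functions,
and, being convex and finite on `(U(0),∞)`, continuous there; at `c = U(0)`, where `D_p` is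
maximal, lower semicontinuity is all that is needed. Finiteness for `c > U(0)` comes from a
majorant of the form `c + K p`, available because `U < c` near `0`.
-/

open Set Filter Topology

theorem LowerSemicontinuousWithinAt.continuousWithinAt_of_forall_le {α γ : Type*}
    [TopologicalSpace α] [LinearOrder γ] [TopologicalSpace γ] [OrderTopology γ]
    {f : α → γ} {s : Set α} {x : α} (hf : LowerSemicontinuousWithinAt f s x)
    (hle : ∀ y ∈ s, f y ≤ f x) : ContinuousWithinAt f s x :=
  continuousWithinAt_iff_lower_upperSemicontinuousWithinAt.2
    ⟨hf, fun _ hy => eventually_nhdsWithin_of_forall fun z hz => (hle z hz).trans_lt hy⟩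

variable {p U : ℝ → ℝ}

lemma apply_pos_of_strictMonoOn (hpm : StrictMonoOn p (Icc 0 1)) (hp0 : p 0 = 0) {r : ℝ}
    (hr : r ∈ Ioc 0 1) : 0 < p r :=
  hp0 ▸ hpm (left_mem_Icc.2 zero_le_one) (Ioc_subset_Icc_self hr) hr.1

lemma apply_nonneg_of_monotoneOn (hpm : MonotoneOn p (Icc 0 1)) (hp0 : p 0 = 0) {r : ℝ}
    (hr : r ∈ Icc 0 1) : 0 ≤ p r :=
  hp0 ▸ hpm (left_mem_Icc.2 zero_le_one) hr hr.1

namespace PConcave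

lemma add {φ χ : ℝ → ℝ} (hφ : PConcave p φ) (hχ : PConcave p χ) : PConcave p (φ + χ) := by
  obtain ⟨ψ, hψc, hψ, hφψ⟩ := hφ
  obtain ⟨ω, hωc, hω, hχω⟩ := hχ
  exact ⟨ψ + ω, hψc.add hωc, hψ.add hω, fun r hr => by simp [hφψ r hr, hχω r hr]⟩

lemma const_smul {φ : ℝ → ℝ} (hφ : PConcave p φ) {a : ℝ} (ha : 0 ≤ a) : PConcave p (a • φ) := by
  obtain ⟨ψ, hψc, hψ, hφψ⟩ := hφ
  exact ⟨a • ψ, hψc.const_smul a, hψ.smul ha, fun r hr => by simp [hφψ r hr]⟩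

end PConcave

lemma pConcave_affine (p : ℝ → ℝ) (a b : ℝ) : PConcave p (fun t => a + b * p t) :=
  ⟨fun x => a + b * x, by fun_prop,
    (concaveOn_const a (convex_Icc _ _)).add ((LinearMap.mulLeft ℝ b).concaveOn (convex_Icc _ _)),
    fun _ _ => rfl⟩

def IsPConcaveMajorant (p U : ℝ → ℝ) (c : ℝ) (φ : ℝ → ℝ) : Prop :=
  PConcave p φ ∧ (∀ t ∈ Icc (0:ℝ) 1, U t ≤ φ t) ∧ c ≤ φ 0

namespace IsPConcaveMajorant

lemma smul_add_smul {c₀ c₁ a b : ℝ} {φ₀ φ₁ : ℝ → ℝ} (h₀ : IsPConcaveMajorant p U c₀ φ₀)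
    (h₁ : IsPConcaveMajorant p U c₁ φ₁) (ha : 0 ≤ a) (hb : 0 ≤ b) (hab : a + b = 1) :
    IsPConcaveMajorant p U (a * c₀ + b * c₁) (a • φ₀ + b • φ₁) := by
  refine ⟨(h₀.1.const_smul ha).add (h₁.1.const_smul hb), fun t ht => ?_, ?_⟩
  · calc U t = a * U t + b * U t := by rw [← add_mul, hab, one_mul]
      _ ≤ a * φ₀ t + b * φ₁ t := by gcongr <;> [exact h₀.2.1 t ht; exact h₁.2.1 t ht]
  · simp only [Pi.add_apply, Pi.smul_apply, smul_eq_mul]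
    gcongr
    exacts [h₀.2.2, h₁.2.2]

lemma add_affine (hpm : StrictMonoOn p (Icc 0 1)) (hp0 : p 0 = 0) {c₁ c₂ : ℝ} {φ : ℝ → ℝ}
    (hφ : IsPConcaveMajorant p U c₁ φ) (hc : c₁ ≤ c₂) :
    IsPConcaveMajorant p U c₂ (φ + fun t => (c₂ - c₁) * (1 - p t / p 1)) := by
  have hp1 : 0 < p 1 := apply_pos_of_strictMonoOn hpm hp0 (right_mem_Ioc.2 zero_lt_one)
  refine ⟨?_, fun t ht => ?_, ?_⟩
  · convert hφ.1.add (pConcave_affine p (c₂ - c₁) (-((c₂ - c₁) / p 1))) using 3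
    ring
  · have hpt : p t / p 1 ≤ 1 :=
      div_le_one_of_le₀ (hpm.monotoneOn ht (right_mem_Icc.2 zero_le_one) ht.2) hp1.le
    have : 0 ≤ (c₂ - c₁) * (1 - p t / p 1) := mul_nonneg (sub_nonneg.2 hc) (sub_nonneg.2 hpt)
    show U t ≤ φ t + (c₂ - c₁) * (1 - p t / p 1)
    linarith [hφ.2.1 t ht]
  · simp only [Pi.add_apply, hp0, zero_div, sub_zero, mul_one]
    linarith [hφ.2.2]

end IsPConcaveMajorant

lemma Uc_le {c r : ℝ} {φ : ℝ → ℝ} (hφ : IsPConcaveMajorant p U c φ) (hr : r ∈ Icc (0:ℝ) 1) :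
    Uc p U c r ≤ φ r :=
  csInf_le ⟨U r, by rintro _ ⟨ψ, -, hUψ, -, rfl⟩; exact hUψ r hr⟩ ⟨φ, hφ.1, hφ.2.1, hφ.2.2, rfl⟩

lemma exists_isPConcaveMajorant (hU : ContinuousOn U (Icc 0 1)) (c : ℝ) :
    ∃ φ, IsPConcaveMajorant p U c φ := by
  obtain ⟨M, hM⟩ := isCompact_Icc.bddAbove_image hU
  exact ⟨fun _ => max M c,
    ⟨fun _ => max M c, continuousOn_const, concaveOn_const _ (convex_Icc _ _), fun _ _ => rfl⟩,
    fun t ht => (hM (mem_image_of_mem U ht)).trans (le_max_left _ _), le_max_right _ _⟩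

lemma le_Uc (hU : ContinuousOn U (Icc 0 1)) {b c r : ℝ}
    (h : ∀ φ, IsPConcaveMajorant p U c φ → b ≤ φ r) : b ≤ Uc p U c r := by
  obtain ⟨φ, hφ⟩ := exists_isPConcaveMajorant hU c
  refine le_csInf ⟨φ r, φ, hφ.1, hφ.2.1, hφ.2.2, rfl⟩ ?_
  rintro _ ⟨ψ, h₁, h₂, h₃, rfl⟩
  exact h ψ ⟨h₁, h₂, h₃⟩

lemma exists_isPConcaveMajorant_le_Uc_add (hU : ContinuousOn U (Icc 0 1)) (c r : ℝ) {ε : ℝ}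
    (hε : 0 < ε) : ∃ φ, IsPConcaveMajorant p U c φ ∧ φ r ≤ Uc p U c r + ε := by
  by_contra! h
  linarith [le_Uc hU fun φ hφ => (h φ hφ).le]

lemma convexOn_Uc (hU : ContinuousOn U (Icc 0 1)) {r : ℝ} (hr : r ∈ Icc (0:ℝ) 1) :
    ConvexOn ℝ univ (fun c => Uc p U c r) := by
  refine ⟨convex_univ, fun c₀ _ c₁ _ a b ha hb hab => ?_⟩
  simp only [smul_eq_mul]
  refine le_of_forall_pos_le_add fun ε hε => ?_
  obtain ⟨φ₀, h₀, hφ₀⟩ := exists_isPConcaveMajorant_le_Uc_add hU c₀ r hε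
  obtain ⟨φ₁, h₁, hφ₁⟩ := exists_isPConcaveMajorant_le_Uc_add hU c₁ r hε
  calc Uc p U (a * c₀ + b * c₁) r ≤ a * φ₀ r + b * φ₁ r := Uc_le (h₀.smul_add_smul h₁ ha hb hab) hr
    _ ≤ a * (Uc p U c₀ r + ε) + b * (Uc p U c₁ r + ε) := by gcongr
    _ = a * Uc p U c₀ r + b * Uc p U c₁ r + ε := by linear_combination ε * hab

lemma Uc_le_add (hpm : StrictMonoOn p (Icc 0 1)) (hp0 : p 0 = 0) (hU : ContinuousOn U (Icc 0 1))
    {c₁ c₂ r : ℝ} (hc : c₁ ≤ c₂) (hr : r ∈ Icc (0:ℝ) 1) :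
    Uc p U c₂ r ≤ Uc p U c₁ r + (c₂ - c₁) * (1 - p r / p 1) := by
  have : Uc p U c₂ r - (c₂ - c₁) * (1 - p r / p 1) ≤ Uc p U c₁ r := le_Uc hU fun φ hφ => by
    have := Uc_le (hφ.add_affine hpm hp0 hc) hr
    simp only [Pi.add_apply] at this
    linarith
  linarith

lemma chord_le_Uc (hpm : StrictMonoOn p (Icc 0 1)) (hp0 : p 0 = 0) (hU : ContinuousOn U (Icc 0 1))
    {c r s : ℝ} (hr : r ∈ Ioc (0:ℝ) 1) (hs : s ∈ Ioc (0:ℝ) 1) (hrs : r ≤ s) :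
    c + p r / p s * (Uc p U c s - c) ≤ Uc p U c r := by
  have hps := apply_pos_of_strictMonoOn hpm hp0 hs
  have hsI := Ioc_subset_Icc_self hs
  set t := p r / p s
  have ht₀ : 0 ≤ t := div_nonneg (apply_pos_of_strictMonoOn hpm hp0 hr).le hps.le
  have ht₁ : t ≤ 1 := div_le_one_of_le₀ (hpm.monotoneOn (Ioc_subset_Icc_self hr) hsI hrs) hps.le
  refine le_Uc hU fun φ hφ => ?_
  obtain ⟨ψ, -, hψ, hφψ⟩ := hφ.1
  have hψ₀ : φ 0 = ψ 0 := by simpa [hp0] using hφψ 0 (left_mem_Icc.2 zero_le_one)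
  have hconc := hψ.2 (left_mem_Icc.2 (apply_nonneg_of_monotoneOn hpm.monotoneOn hp0
    (right_mem_Icc.2 zero_le_one))) ⟨hps.le, hpm.monotoneOn hsI (right_mem_Icc.2 zero_le_one) hs.2⟩
    (sub_nonneg.2 ht₁) ht₀ (sub_add_cancel 1 t)
  rw [smul_zero, zero_add, smul_eq_mul, smul_eq_mul, smul_eq_mul,
    show t * p s = p r from div_mul_cancel₀ _ hps.ne'] at hconc
  calc c + t * (Uc p U c s - c) = (1 - t) * c + t * Uc p U c s := by ring
    _ ≤ (1 - t) * ψ 0 + t * ψ (p s) := by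
      gcongr
      · exact hψ₀ ▸ hφ.2.2
      · exact hφψ s hsI ▸ Uc_le hφ hsI
    _ ≤ ψ (p r) := hconc
    _ = φ r := (hφψ r (Ioc_subset_Icc_self hr)).symm

lemma exists_le_add_mul_of_lt (hpm : StrictMonoOn p (Icc 0 1)) (hp0 : p 0 = 0)
    (hU : ContinuousOn U (Icc 0 1)) {c : ℝ} (hc : U 0 < c) :
    ∃ K, ∀ t ∈ Icc (0:ℝ) 1, U t ≤ c + K * p t := by
  have hev : ∀ᶠ t in 𝓝[Icc 0 1] 0, U t < c :=
    (hU 0 (left_mem_Icc.2 zero_le_one)).eventually_lt_const hc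
  rw [nhdsWithin_Icc_eq_nhdsGE zero_lt_one] at hev
  obtain ⟨u, hu, hUc⟩ := mem_nhdsGE_iff_exists_Icc_subset.1 hev
  obtain ⟨M, hM⟩ := isCompact_Icc.bddAbove_image hU
  set δ := min u 1
  have hδ : δ ∈ Ioc 0 1 := ⟨lt_min hu zero_lt_one, min_le_right _ _⟩
  have hpδ : 0 < p δ := apply_pos_of_strictMonoOn hpm hp0 hδ
  refine ⟨max 0 ((M - c) / p δ), fun t ht => ?_⟩
  have hK := le_max_left 0 ((M - c) / p δ)
  rcases le_or_gt t δ with htδ | hδt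
  · have : U t < c := hUc ⟨ht.1, htδ.trans (min_le_left _ _)⟩
    nlinarith [apply_nonneg_of_monotoneOn hpm.monotoneOn hp0 ht]
  · have hMc : M - c ≤ max 0 ((M - c) / p δ) * p δ :=
      (div_le_iff₀ hpδ).1 (le_max_right _ _)
    have hpδt : p δ ≤ p t := hpm.monotoneOn (Ioc_subset_Icc_self hδ) ht hδt.le
    nlinarith [hM (mem_image_of_mem U ht)]

noncomputable def diffQuot (p U : ℝ → ℝ) (c r : ℝ) : ℝ := (Uc p U c r - c) / p r

lemma diffQuot_antitoneOn (hpm : StrictMonoOn p (Icc 0 1)) (hp0 : p 0 = 0)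
    (hU : ContinuousOn U (Icc 0 1)) (c : ℝ) : AntitoneOn (diffQuot p U c) (Ioc 0 1) := by
  intro r hr s hs hrs
  have hps := apply_pos_of_strictMonoOn hpm hp0 hs
  rw [diffQuot, diffQuot, div_le_div_iff₀ hps (apply_pos_of_strictMonoOn hpm hp0 hr)]
  calc (Uc p U c s - c) * p r = p r / p s * (Uc p U c s - c) * p s := by field_simp
    _ ≤ (Uc p U c r - c) * p s := by
      gcongr
      linarith [chord_le_Uc hpm hp0 hU (c := c) hr hs hrs]

lemma convexOn_diffQuot (hU : ContinuousOn U (Icc 0 1)) {r : ℝ} (hr : r ∈ Icc (0:ℝ) 1)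
    (hpr : 0 ≤ p r) : ConvexOn ℝ univ (fun c => diffQuot p U c r) := by
  refine (((convexOn_Uc (p := p) hU hr).sub (concaveOn_id convex_univ)).smul
    (inv_nonneg.2 hpr)).congr fun c _ => ?_
  simp [diffQuot, div_eq_inv_mul]

lemma continuous_diffQuot (hU : ContinuousOn U (Icc 0 1)) {r : ℝ} (hr : r ∈ Icc (0:ℝ) 1) :
    Continuous (fun c => diffQuot p U c r) :=
  (continuousOn_univ.1 ((convexOn_Uc hU hr).continuousOn isOpen_univ)).sub continuous_id
    |>.div_const _

lemma diffQuot_add_le (hpm : StrictMonoOn p (Icc 0 1)) (hp0 : p 0 = 0)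
    (hU : ContinuousOn U (Icc 0 1)) {c₁ c₂ r : ℝ} (hc : c₁ ≤ c₂) (hr : r ∈ Ioc (0:ℝ) 1) :
    diffQuot p U c₂ r + (c₂ - c₁) / p 1 ≤ diffQuot p U c₁ r := by
  have hpr := apply_pos_of_strictMonoOn hpm hp0 hr
  have := Uc_le_add hpm hp0 hU hc (Ioc_subset_Icc_self hr)
  have hp1 : p 1 ≠ 0 := (apply_pos_of_strictMonoOn hpm hp0 (right_mem_Ioc.2 zero_lt_one)).ne'
  rw [diffQuot, diffQuot, ← le_sub_iff_add_le, div_le_iff₀ hpr]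
  calc Uc p U c₂ r - c₂ ≤ Uc p U c₁ r + (c₂ - c₁) * (1 - p r / p 1) - c₂ := by linarith
    _ = ((Uc p U c₁ r - c₁) / p r - (c₂ - c₁) / p 1) * p r := by field_simp; ring

/-- `D_p(c)`, taken as the supremum of the difference quotients over `r ∈ (0,1)`: they are
antitone in `r`, so this is their limit as `r ↓ 0`. -/
noncomputable def slopeAtZero (p U : ℝ → ℝ) (c : ℝ) : EReal :=
  sSup ((fun r => (diffQuot p U c r : EReal)) '' Ioo 0 1)

lemma diffQuot_le_slopeAtZero {c r : ℝ} (hr : r ∈ Ioo (0:ℝ) 1) :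
    (diffQuot p U c r : EReal) ≤ slopeAtZero p U c :=
  le_sSup (mem_image_of_mem _ hr)

lemma slopeAtZero_le_coe {c K : ℝ} (h : ∀ r ∈ Ioo (0:ℝ) 1, diffQuot p U c r ≤ K) :
    slopeAtZero p U c ≤ K :=
  sSup_le (forall_mem_image.2 fun r hr => EReal.coe_le_coe_iff.2 (h r hr))

lemma slopeAtZero_ne_bot {c : ℝ} : slopeAtZero p U c ≠ ⊥ :=
  ((EReal.bot_lt_coe _).trans_le (diffQuot_le_slopeAtZero (r := 1 / 2) (by norm_num))).ne'

lemma slopeAtZero_ne_top (hpm : StrictMonoOn p (Icc 0 1)) (hp0 : p 0 = 0)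
    (hU : ContinuousOn U (Icc 0 1)) {c : ℝ} (hc : U 0 < c) : slopeAtZero p U c ≠ ⊤ := by
  obtain ⟨K, hK⟩ := exists_le_add_mul_of_lt hpm hp0 hU hc
  have hmaj : IsPConcaveMajorant p U c (fun t => c + K * p t) :=
    ⟨pConcave_affine p c K, hK, by simp [hp0]⟩
  refine ne_top_of_le_ne_top (EReal.coe_ne_top K) (slopeAtZero_le_coe fun r hr => ?_)
  have hpr := apply_pos_of_strictMonoOn hpm hp0 (Ioo_subset_Ioc_self hr)
  rw [diffQuot, div_le_iff₀ hpr]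
  linarith [Uc_le hmaj (Ioo_subset_Icc_self hr)]

lemma diffQuot_le_toReal_slopeAtZero {c r : ℝ} (hc : slopeAtZero p U c ≠ ⊤)
    (hr : r ∈ Ioo (0:ℝ) 1) : diffQuot p U c r ≤ (slopeAtZero p U c).toReal := by
  rw [← EReal.coe_le_coe_iff, EReal.coe_toReal hc slopeAtZero_ne_bot]
  exact diffQuot_le_slopeAtZero hr

lemma tendsto_slopeAtZero (hpm : StrictMonoOn p (Icc 0 1)) (hp0 : p 0 = 0)
    (hU : ContinuousOn U (Icc 0 1)) (c : ℝ) :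
    Tendsto (fun r => (diffQuot p U c r : EReal)) (𝓝[>] 0) (𝓝 (slopeAtZero p U c)) :=
  AntitoneOn.tendsto_nhdsWithin_Ioo_right (nonempty_Ioo.2 zero_lt_one)
    (fun _ hr _ hs hrs => EReal.coe_le_coe_iff.2 <| diffQuot_antitoneOn hpm hp0 hU c
      (Ioo_subset_Ioc_self hr) (Ioo_subset_Ioc_self hs) hrs)
    (OrderTop.bddAbove _)

lemma antitone_slopeAtZero (hpm : StrictMonoOn p (Icc 0 1)) (hp0 : p 0 = 0)
    (hU : ContinuousOn U (Icc 0 1)) : Antitone (slopeAtZero p U) := by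
  intro c₁ c₂ hc
  refine sSup_le (forall_mem_image.2 fun r hr => le_trans ?_ (diffQuot_le_slopeAtZero hr))
  have hp1 := apply_pos_of_strictMonoOn hpm hp0 (right_mem_Ioc.2 zero_lt_one)
  have := diffQuot_add_le hpm hp0 hU hc (Ioo_subset_Ioc_self hr)
  exact EReal.coe_le_coe_iff.2 (by linarith [div_nonneg (sub_nonneg.2 hc) hp1.le])

lemma strictAntiOn_slopeAtZero (hpm : StrictMonoOn p (Icc 0 1)) (hp0 : p 0 = 0)
    (hU : ContinuousOn U (Icc 0 1)) : StrictAntiOn (slopeAtZero p U) (Ici (U 0)) := by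
  intro c₁ hc₁ c₂ _ hc
  have h₂ := slopeAtZero_ne_top hpm hp0 hU (lt_of_le_of_lt hc₁ hc)
  rcases eq_or_ne (slopeAtZero p U c₁) ⊤ with h₁ | h₁
  · exact h₁ ▸ h₂.lt_top
  rw [← EReal.coe_toReal h₁ slopeAtZero_ne_bot, ← EReal.coe_toReal h₂ slopeAtZero_ne_bot,
    EReal.coe_lt_coe_iff]
  have hp1 := apply_pos_of_strictMonoOn hpm hp0 (right_mem_Ioc.2 zero_lt_one)
  have hgap : 0 < (c₂ - c₁) / p 1 := div_pos (sub_pos.2 hc) hp1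
  have : slopeAtZero p U c₂ ≤ ((slopeAtZero p U c₁).toReal - (c₂ - c₁) / p 1 : ℝ) :=
    slopeAtZero_le_coe fun r hr => by
      linarith [diffQuot_add_le hpm hp0 hU hc.le (Ioo_subset_Ioc_self hr),
        diffQuot_le_toReal_slopeAtZero h₁ hr]
  rw [← EReal.coe_toReal h₂ slopeAtZero_ne_bot, EReal.coe_le_coe_iff] at this
  linarith

lemma lowerSemicontinuous_slopeAtZero (hU : ContinuousOn U (Icc 0 1)) :
    LowerSemicontinuous (slopeAtZero p U) := by
  rw [show slopeAtZero p U = fun c => ⨆ r ∈ Ioo (0:ℝ) 1, (diffQuot p U c r : EReal) from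
    funext fun _ => sSup_image]
  exact lowerSemicontinuous_biSup fun r hr =>
    (continuous_coe_real_ereal.comp
      (continuous_diffQuot hU (Ioo_subset_Icc_self hr))).lowerSemicontinuous

lemma convexOn_toReal_slopeAtZero (hpm : StrictMonoOn p (Icc 0 1)) (hp0 : p 0 = 0)
    (hU : ContinuousOn U (Icc 0 1)) :
    ConvexOn ℝ (Ioi (U 0)) (fun c => (slopeAtZero p U c).toReal) := by
  refine ⟨convex_Ioi _, fun c₀ hc₀ c₁ hc₁ a b ha hb hab => ?_⟩
  have h₀ := slopeAtZero_ne_top hpm hp0 hU hc₀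
  have h₁ := slopeAtZero_ne_top hpm hp0 hU hc₁
  have : slopeAtZero p U (a • c₀ + b • c₁) ≤
      (a • (slopeAtZero p U c₀).toReal + b • (slopeAtZero p U c₁).toReal : ℝ) :=
    slopeAtZero_le_coe fun r hr => by
      have hpr := apply_pos_of_strictMonoOn hpm hp0 (Ioo_subset_Ioc_self hr)
      calc diffQuot p U (a • c₀ + b • c₁) r
          ≤ a • diffQuot p U c₀ r + b • diffQuot p U c₁ r :=
            (convexOn_diffQuot hU (Ioo_subset_Icc_self hr) hpr.le).2 trivial trivial ha hb hab
        _ ≤ _ := by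
          gcongr
          exacts [diffQuot_le_toReal_slopeAtZero h₀ hr, diffQuot_le_toReal_slopeAtZero h₁ hr]
  exact (EReal.toReal_le_toReal this slopeAtZero_ne_bot (EReal.coe_ne_top _)).trans_eq
    (EReal.toReal_coe _)

lemma continuousOn_slopeAtZero (hpm : StrictMonoOn p (Icc 0 1)) (hp0 : p 0 = 0)
    (hU : ContinuousOn U (Icc 0 1)) : ContinuousOn (slopeAtZero p U) (Ici (U 0)) := by
  intro c hc
  rcases (mem_Ici.1 hc).eq_or_lt with rfl | hc
  · exact (lowerSemicontinuous_slopeAtZero hU).lowerSemicontinuousWithinAt _ _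
      |>.continuousWithinAt_of_forall_le fun _ h => antitone_slopeAtZero hpm hp0 hU h
  · have hcont : ContinuousOn (slopeAtZero p U) (Ioi (U 0)) :=
      (continuous_coe_real_ereal.comp_continuousOn
        ((convexOn_toReal_slopeAtZero hpm hp0 hU).continuousOn isOpen_Ioi)).congr
        fun c hc => (EReal.coe_toReal (slopeAtZero_ne_top hpm hp0 hU hc) slopeAtZero_ne_bot).symm
    exact (hcont.continuousAt (Ioi_mem_nhds hc)).continuousWithinAt

theorem Uc_slope_at_origin_properties_general (p U : ℝ → ℝ)
    (hpm : StrictMonoOn p (Set.Icc 0 1))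
    (hp0 : p 0 = 0)
    (hU : ContinuousOn U (Set.Icc 0 1)) :
    ∃ D : ℝ → EReal,
      (∀ c : ℝ, U 0 ≤ c → D c ≠ ⊥ ∧
        Filter.Tendsto (fun r : ℝ => (((Uc p U c r - c) / p r : ℝ) : EReal))
          (nhdsWithin 0 (Set.Ioi 0)) (nhds (D c))) ∧
      (∀ c : ℝ, U 0 < c → ∃ x : ℝ, D c = (x : EReal)) ∧
      StrictAntiOn D (Set.Ici (U 0)) ∧
      ContinuousOn D (Set.Ici (U 0)) :=
  ⟨slopeAtZero p U,
    fun c _ => ⟨slopeAtZero_ne_bot, tendsto_slopeAtZero hpm hp0 hU c⟩,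
    fun _ hc => ⟨_, (EReal.coe_toReal (slopeAtZero_ne_top hpm hp0 hU hc) slopeAtZero_ne_bot).symm⟩,
    strictAntiOn_slopeAtZero hpm hp0 hU,
    continuousOn_slopeAtZero hpm hp0 hU⟩

/-- There is a function `D : [U(0),∞) → ℝ ∪ {+∞}`, `D(c) = lim_{r↓0} (U⁽ᶜ⁾(r) − c)/p(r)`
(the limit exists), which is finite for `c > U(0)`, strictly decreasing, and continuous
on `[U(0),∞)`. -/
theorem Uc_slope_at_origin_properties (p U : ℝ → ℝ)
    (hpc : ContinuousOn p (Set.Icc 0 1)) (hpm : StrictMonoOn p (Set.Icc 0 1))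
    (hp0 : p 0 = 0)
    (hU : ContinuousOn U (Set.Icc 0 1)) :
    ∃ D : ℝ → EReal,
      (∀ c : ℝ, U 0 ≤ c → D c ≠ ⊥ ∧
        Filter.Tendsto (fun r : ℝ => (((Uc p U c r - c) / p r : ℝ) : EReal))
          (nhdsWithin 0 (Set.Ioi 0)) (nhds (D c))) ∧
      (∀ c : ℝ, U 0 < c → ∃ x : ℝ, D c = (x : EReal)) ∧
      StrictAntiOn D (Set.Ici (U 0)) ∧
      ContinuousOn D (Set.Ici (U 0)) :=
  Uc_slope_at_origin_properties_general p U hpm hp0 hU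
end

section
/- For every c ≥ U(0) and every r ∈ [0,1], the smallest p-concave majorant admits the countable affine representation U⁽ᶜ⁾(r) = inf{ a·p(r) + b : a, b ∈ ℚ, b ≥ c, and a·p(s) + b ≥ U(s) for all s ∈ [0,1] } (the family of such rational pairs (a,b) is nonempty). -/
/-!
Let `φ = ψ ∘ p` be a `p`-concave majorant of `U` with `φ 0 ≥ c`, and let `ε > 0`. The secant of
`ψ` through `p r` and a nearby point, raised by `ε`, is an affine majorant `a x + b` of `ψ` that
exceeds `ψ (p r)` by at most `ε`: concavity puts `ψ` below the secant away from the short chord,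
and continuity of `ψ` at `p r` controls both on the chord. Then `a * p + b` majorizes `U`, and
`b ≥ φ 0 ≥ c` because `p 0 = 0`. Raising `a` and `b` slightly to rationals preserves both
properties, as `p ≥ 0`, and changes the value at `r` by less than `ε`. Conversely every such
`a * p + b` is itself `p`-concave, so the two infima agree.
-/

open scoped Classical

open Set

theorem Convex.exists_mem_ne_dist_lt {E : Type*} [NormedAddCommGroup E] [NormedSpace ℝ E]
    {s : Set E} (hs : Convex ℝ s) {x₀ x' : E} (hx₀ : x₀ ∈ s) (hx' : x' ∈ s) (hne : x' ≠ x₀)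
    {δ : ℝ} (hδ : 0 < δ) : ∃ x₁ ∈ s, x₁ ≠ x₀ ∧ dist x₁ x₀ < δ := by
  have hd : 0 < ‖x' - x₀‖ := norm_pos_iff.mpr (sub_ne_zero.mpr hne)
  set t := min 1 (δ / (2 * ‖x' - x₀‖))
  have ht : 0 < t := lt_min one_pos (by positivity)
  refine ⟨x₀ + t • (x' - x₀), hs.add_smul_sub_mem hx₀ hx' ⟨ht.le, min_le_left _ _⟩, ?_, ?_⟩
  · simpa [ht.ne', sub_eq_zero] using hne
  · calc dist (x₀ + t • (x' - x₀)) x₀ = t * ‖x' - x₀‖ := by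
          rw [dist_eq_norm, add_sub_cancel_left, norm_smul, Real.norm_of_nonneg ht.le]
      _ ≤ δ / (2 * ‖x' - x₀‖) * ‖x' - x₀‖ := by gcongr; exact min_le_right _ _
      _ < δ := by rw [div_mul_eq_mul_div, div_lt_iff₀ (by positivity)]; nlinarith

theorem ConcaveOn.le_add_slope_mul_of_abs_lt {s : Set ℝ} {f : ℝ → ℝ} (hf : ConcaveOn ℝ s f)
    {x₀ x₁ x : ℝ} (hx₀ : x₀ ∈ s) (hx₁ : x₁ ∈ s) (hx : x ∈ s) (hne : x₁ ≠ x₀)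
    (hfar : |x₁ - x₀| < |x - x₀|) : f x ≤ f x₀ + slope f x₀ x₁ * (x - x₀) := by
  have hxne : x ≠ x₀ := by rintro rfl; simp at hfar; linarith [abs_nonneg (x₁ - x)]
  have hsub : slope f x₀ x * (x - x₀) = f x - f x₀ := by
    rw [mul_comm]; exact sub_smul_slope f x₀ x
  rcases hxne.lt_or_gt with hlt | hgt
  · have hxx₁ : x ≤ x₁ := by
      rw [abs_of_neg (sub_neg.mpr hlt)] at hfar; linarith [neg_abs_le (x₁ - x₀)]
    nlinarith [hf.slope_anti hx₀ ⟨hx, hxne⟩ ⟨hx₁, hne⟩ hxx₁]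
  · have hx₁x : x₁ ≤ x := by
      rw [abs_of_pos (sub_pos.mpr hgt)] at hfar; linarith [le_abs_self (x₁ - x₀)]
    nlinarith [hf.slope_anti hx₀ ⟨hx₁, hne⟩ ⟨hx, hxne⟩ hx₁x]

theorem ConcaveOn.exists_affine_ge_of_continuousWithinAt {s : Set ℝ} {f : ℝ → ℝ}
    (hf : ConcaveOn ℝ s f) {x₀ : ℝ} (hx₀ : x₀ ∈ s) (hcont : ContinuousWithinAt f s x₀)
    {ε : ℝ} (hε : 0 < ε) :
    ∃ a b : ℝ, (∀ x ∈ s, f x ≤ a * x + b) ∧ a * x₀ + b ≤ f x₀ + ε := by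
  by_cases hs : ∃ x' ∈ s, x' ≠ x₀
  swap
  · push Not at hs
    exact ⟨0, f x₀, fun x hx => by simp [hs x hx], by simp [hε.le]⟩
  obtain ⟨x', hx', hne'⟩ := hs
  obtain ⟨δ, hδ, hfδ⟩ := Metric.continuousWithinAt_iff.mp hcont (ε / 2) (half_pos hε)
  obtain ⟨x₁, hx₁, hne, hx₁δ⟩ := hf.1.exists_mem_ne_dist_lt hx₀ hx' hne' hδ
  set m := slope f x₀ x₁
  have hm : m * (x₁ - x₀) = f x₁ - f x₀ := by
    rw [mul_comm]; exact sub_smul_slope f x₀ x₁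
  have hfx₁ : |f x₁ - f x₀| < ε / 2 := hfδ hx₁ hx₁δ
  refine ⟨m, f x₀ - m * x₀ + ε, fun x hx => ?_, by linarith⟩
  rcases le_or_gt |x - x₀| |x₁ - x₀| with hnear | hfar
  · have hfx : |f x - f x₀| < ε / 2 := hfδ hx (by rw [Real.dist_eq]; exact hnear.trans_lt hx₁δ)
    have hmx : |m * (x - x₀)| ≤ |f x₁ - f x₀| := by
      rw [← hm, abs_mul, abs_mul]; gcongr
    linarith [abs_le.mp hmx, abs_lt.mp hfx]
  · linarith [hf.le_add_slope_mul_of_abs_lt hx₀ hx₁ hx hne hfar]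

theorem exists_rat_ge_affine_lt (a b : ℝ) {x ε : ℝ} (hx : 0 ≤ x) (hε : 0 < ε) :
    ∃ a' b' : ℚ, a ≤ a' ∧ b ≤ b' ∧ (a' : ℝ) * x + b' < a * x + b + ε := by
  obtain ⟨a', ha, ha'⟩ := exists_rat_btwn (lt_add_of_pos_right a (by positivity :
    0 < ε / (2 * (x + 1))))
  obtain ⟨b', hb, hb'⟩ := exists_rat_btwn (lt_add_of_pos_right b (half_pos hε))
  refine ⟨a', b', ha.le, hb.le, ?_⟩
  have : ((a' : ℝ) - a) * x < ε / 2 :=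
    calc ((a' : ℝ) - a) * x ≤ ε / (2 * (x + 1)) * x := by gcongr; linarith
      _ < ε / 2 := by rw [div_mul_eq_mul_div, div_lt_div_iff₀ (by positivity) two_pos]; nlinarith
  linarith

theorem csInf_eq_csInf_of_subset_of_forall_exists_le_add {S T : Set ℝ} (hTS : T ⊆ S)
    (hT : T.Nonempty) (hS : BddBelow S) (h : ∀ y ∈ S, ∀ ε > 0, ∃ z ∈ T, z ≤ y + ε) :
    sInf S = sInf T :=
  le_antisymm (csInf_le_csInf hS hT hTS) <| le_csInf (hT.mono hTS) fun y hy =>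
    le_of_forall_pos_le_add fun ε hε =>
      let ⟨_, hz, hzy⟩ := h y hy ε hε
      (csInf_le (hS.mono hTS) hz).trans hzy

theorem pConcave_affine_comp (p : ℝ → ℝ) (a b : ℝ) : PConcave p fun t => a * p t + b :=
  ⟨fun x => a * x + b, by fun_prop,
    ((LinearMap.mul ℝ ℝ a).concaveOn (convex_Icc _ _)).add_const b, fun _ _ => rfl⟩

theorem PConcave.exists_affine_comp_ge {p φ : ℝ → ℝ} (hφ : PConcave p φ)
    (hp : MonotoneOn p (Icc 0 1)) (hp0 : p 0 = 0) {r : ℝ} (hr : r ∈ Icc (0 : ℝ) 1) {ε : ℝ}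
    (hε : 0 < ε) :
    ∃ a b : ℝ, φ 0 ≤ b ∧ (∀ t ∈ Icc (0 : ℝ) 1, φ t ≤ a * p t + b) ∧ a * p r + b ≤ φ r + ε := by
  obtain ⟨ψ, hψc, hψ, hφψ⟩ := hφ
  have hmaps : MapsTo p (Icc 0 1) (Icc 0 (p 1)) := by
    simpa only [hp0] using hp.mapsTo_Icc
  obtain ⟨a, b, hab, habr⟩ :=
    hψ.exists_affine_ge_of_continuousWithinAt (hmaps hr) (hψc _ (hmaps hr)) hε
  have hmaj : ∀ t ∈ Icc (0 : ℝ) 1, φ t ≤ a * p t + b := fun t ht =>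
    (hφψ t ht).trans_le (hab _ (hmaps ht))
  refine ⟨a, b, ?_, hmaj, by rwa [hφψ r hr]⟩
  simpa [hp0] using hmaj 0 (left_mem_Icc.mpr zero_le_one)

theorem Uc_countable_affine_representation_general (p U : ℝ → ℝ)
    (hpm : StrictMonoOn p (Set.Icc 0 1))
    (hp0 : p 0 = 0)
    (hU : ContinuousOn U (Set.Icc 0 1))
    (c : ℝ) :
    (∃ a b : ℚ, c ≤ (b : ℝ) ∧ ∀ t ∈ Set.Icc (0:ℝ) 1, U t ≤ (a : ℝ) * p t + (b : ℝ)) ∧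
    (∀ r ∈ Set.Icc (0:ℝ) 1,
      Uc p U c r = sInf {y : ℝ | ∃ a b : ℚ, c ≤ (b : ℝ) ∧
        (∀ t ∈ Set.Icc (0:ℝ) 1, U t ≤ (a : ℝ) * p t + (b : ℝ)) ∧
        y = (a : ℝ) * p r + (b : ℝ)}) := by
  have hp_nonneg : ∀ t ∈ Icc (0 : ℝ) 1, 0 ≤ p t := fun t ht => by
    simpa only [hp0] using (hpm.monotoneOn.mapsTo_Icc ht).1
  have hmaj : ∃ a b : ℚ, c ≤ (b : ℝ) ∧ ∀ t ∈ Icc (0 : ℝ) 1, U t ≤ (a : ℝ) * p t + b := by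
    obtain ⟨M, hM⟩ := (isCompact_Icc.image_of_continuousOn hU).bddAbove
    obtain ⟨b, hb⟩ := exists_rat_gt (max M c)
    refine ⟨0, b, (le_max_right M c).trans hb.le, fun t ht => ?_⟩
    simpa using (hM ⟨t, ht, rfl⟩).trans ((le_max_left M c).trans hb.le)
  refine ⟨hmaj, fun r hr => csInf_eq_csInf_of_subset_of_forall_exists_le_add ?_ ?_ ?_ ?_⟩
  · rintro y ⟨a, b, hcb, hUab, rfl⟩
    exact ⟨_, pConcave_affine_comp p a b, hUab, by simpa [hp0] using hcb, rfl⟩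
  · obtain ⟨a, b, hcb, hUab⟩ := hmaj
    exact ⟨_, a, b, hcb, hUab, rfl⟩
  · exact ⟨U r, by rintro y ⟨φ, -, hUφ, -, rfl⟩; exact hUφ r hr⟩
  · rintro y ⟨φ, hφ, hUφ, hcφ, rfl⟩ ε hε
    obtain ⟨a, b, hφb, hφab, habr⟩ :=
      hφ.exists_affine_comp_ge hpm.monotoneOn hp0 hr (half_pos hε)
    obtain ⟨a', b', haa', hbb', hab'⟩ :=
      exists_rat_ge_affine_lt a b (hp_nonneg r hr) (half_pos hε)
    refine ⟨_, ⟨a', b', hcφ.trans (hφb.trans hbb'), fun t ht => ?_, rfl⟩, by linarith⟩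
    calc U t ≤ φ t := hUφ t ht
      _ ≤ a * p t + b := hφab t ht
      _ ≤ a' * p t + b' := by have := hp_nonneg t ht; gcongr

/-- The smallest `p`-concave majorant admits a countable representation as the infimum of
rational affine transformations `a·p + b` of the scale function that majorize `U` and
have `b ≥ c`. -/
theorem Uc_countable_affine_representation (p U : ℝ → ℝ)
    (hpc : ContinuousOn p (Set.Icc 0 1)) (hpm : StrictMonoOn p (Set.Icc 0 1))
    (hp0 : p 0 = 0)
    (hU : ContinuousOn U (Set.Icc 0 1))
    (c : ℝ) (hc : U 0 ≤ c) :
    (∃ a b : ℚ, c ≤ (b : ℝ) ∧ ∀ t ∈ Set.Icc (0:ℝ) 1, U t ≤ (a : ℝ) * p t + (b : ℝ)) ∧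
    (∀ r ∈ Set.Icc (0:ℝ) 1,
      Uc p U c r = sInf {y : ℝ | ∃ a b : ℚ, c ≤ (b : ℝ) ∧
        (∀ t ∈ Set.Icc (0:ℝ) 1, U t ≤ (a : ℝ) * p t + (b : ℝ)) ∧
        y = (a : ℝ) * p r + (b : ℝ)}) :=
  Uc_countable_affine_representation_general p U hpm hp0 hU c
end

section
/- Let U* := max_{r ∈ [0,1]} U(r), λ := min{ r ∈ [0,1] : U(r) = U* } and ϱ := max{ r ∈ [0,1] : U(r) = U* }, let c ≥ U(0), and set W := U⁽ᶜ⁾. Then: (i) if c < U*, then W = U* on [λ,ϱ], W is nondecreasing on [0,λ] (equivalently its left derivatives are ≥ 0 on (0,λ)), and W is nonincreasing on [ϱ,1] (its left derivatives are ≤ 0 on (ϱ,1)); (ii) if c = U*, then W = U* on [0,ϱ] and W is nonincreasing on [ϱ,1]; (iii) if c > U*, then W is nonincreasing on [0,1]. -/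
open scoped Classical

/-!
Every `p`-concave function is quasiconcave on `[0,1]`: on `[a, b]` it stays above
`min (φ a) (φ b)`. An admissible `φ` (a `p`-concave majorant of `U` with `φ 0 ≥ c`) is at
least `M` at an anchor `a` (`M = U*` at `λ` or `ϱ`, `M = c` at `0`), while the constant `M`
is itself admissible, so `U⁽ᶜ⁾ ≤ M`. Hence, for `s` between `r` and the anchor, either
`φ s ≥ φ r ≥ U⁽ᶜ⁾(r)` or `φ s ≥ M ≥ U⁽ᶜ⁾(r)`; taking the infimum over `φ` shows that
`U⁽ᶜ⁾` increases towards the anchor. Between two anchors the same argument pins `U⁽ᶜ⁾` to `M`.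
-/

open Set

theorem PConcave.const (p : ℝ → ℝ) (κ : ℝ) : PConcave p fun _ => κ :=
  ⟨fun _ => κ, continuousOn_const, concaveOn_const κ (convex_Icc _ _), fun _ _ => rfl⟩

theorem PConcave.min_le_of_mem_Icc {p φ : ℝ → ℝ} (hφ : PConcave p φ)
    (hpm : MonotoneOn p (Icc 0 1)) (hp0 : p 0 = 0) {a b r : ℝ}
    (ha : a ∈ Icc (0:ℝ) 1) (hb : b ∈ Icc (0:ℝ) 1) (hr : r ∈ Icc a b) :
    min (φ a) (φ b) ≤ φ r := by
  obtain ⟨ψ, -, hψ, hφψ⟩ := hφ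
  have hp_mem : ∀ t ∈ Icc (0:ℝ) 1, p t ∈ Icc 0 (p 1) := fun t ht =>
    ⟨hp0 ▸ hpm ⟨le_rfl, zero_le_one⟩ ht ht.1, hpm ht ⟨zero_le_one, le_rfl⟩ ht.2⟩
  have hr01 : r ∈ Icc (0:ℝ) 1 := ⟨ha.1.trans hr.1, hr.2.trans hb.2⟩
  have hpar : p a ≤ p r := hpm ha hr01 hr.1
  have hprb : p r ≤ p b := hpm hr01 hb hr.2
  rw [hφψ a ha, hφψ b hb, hφψ r hr01]
  exact hψ.ge_on_segment (hp_mem a ha) (hp_mem b hb)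
    (by rw [segment_eq_Icc (hpar.trans hprb)]; exact ⟨hpar, hprb⟩)

theorem IsCompact.isCompact_setOf_eq_sSup_image {α : Type*} [TopologicalSpace α] [T2Space α]
    {K : Set α} {U : α → ℝ} (hK : IsCompact K) (hU : ContinuousOn U K) :
    IsCompact {x ∈ K | U x = sSup (U '' K)} :=
  hK.of_isClosed_subset (hU.preimage_isClosed_of_isClosed hK.isClosed isClosed_singleton)
    fun _ hx => hx.1

theorem IsCompact.nonempty_setOf_eq_sSup_image {α : Type*} [TopologicalSpace α]
    {K : Set α} {U : α → ℝ} (hK : IsCompact K) (hKne : K.Nonempty) (hU : ContinuousOn U K) :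
    {x ∈ K | U x = sSup (U '' K)}.Nonempty := by
  obtain ⟨x, hx, hmax⟩ := hK.exists_isMaxOn hKne hU
  refine ⟨x, hx, le_antisymm ?_ ?_⟩
  · exact le_csSup (hK.image_of_continuousOn hU).bddAbove (mem_image_of_mem U hx)
  · exact csSup_le (hKne.image U) (by rintro _ ⟨y, hy, rfl⟩; exact hmax hy)

/-- The functions over which `Uc p U c` takes its infimum. -/
def UcAdmissible (p U : ℝ → ℝ) (c : ℝ) (φ : ℝ → ℝ) : Prop :=
  PConcave p φ ∧ (∀ t ∈ Icc (0:ℝ) 1, U t ≤ φ t) ∧ c ≤ φ 0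

namespace Uc

variable {p U : ℝ → ℝ} {c : ℝ}

theorem le_apply {φ : ℝ → ℝ} (hφ : UcAdmissible p U c φ) {r : ℝ}
    (hr : r ∈ Icc (0:ℝ) 1) : Uc p U c r ≤ φ r :=
  csInf_le ⟨U r, by rintro _ ⟨ψ, -, hψU, -, rfl⟩; exact hψU r hr⟩
    ⟨φ, hφ.1, hφ.2.1, hφ.2.2, rfl⟩

theorem le_of_forall_le {r b : ℝ} (hne : ∃ φ, UcAdmissible p U c φ)
    (h : ∀ φ, UcAdmissible p U c φ → b ≤ φ r) : b ≤ Uc p U c r := by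
  obtain ⟨φ, hφ⟩ := hne
  refine le_csInf ⟨φ r, φ, hφ.1, hφ.2.1, hφ.2.2, rfl⟩ ?_
  rintro _ ⟨ψ, hψ, hψU, hψc, rfl⟩
  exact h ψ ⟨hψ, hψU, hψc⟩

variable {M a : ℝ} (hcM : c ≤ M) (hUM : ∀ t ∈ Icc (0:ℝ) 1, U t ≤ M)
include hcM hUM

theorem admissible_const : UcAdmissible p U c fun _ => M :=
  ⟨PConcave.const p M, hUM, hcM⟩

theorem le_const {r : ℝ} (hr : r ∈ Icc (0:ℝ) 1) : Uc p U c r ≤ M :=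
  le_apply (admissible_const hcM hUM) hr

variable (hpm : MonotoneOn p (Icc 0 1)) (hp0 : p 0 = 0) (ha : a ∈ Icc (0:ℝ) 1)
  (hMa : ∀ φ, UcAdmissible p U c φ → M ≤ φ a)
include hpm hp0 ha hMa

theorem monotoneOn_Icc_of_anchor : MonotoneOn (Uc p U c) (Icc 0 a) := by
  intro r hr s hs hrs
  have hr01 : r ∈ Icc (0:ℝ) 1 := ⟨hr.1, hr.2.trans ha.2⟩
  refine le_of_forall_le ⟨_, admissible_const hcM hUM⟩ fun φ hφ => ?_
  rcases min_le_iff.mp (hφ.1.min_le_of_mem_Icc hpm hp0 hr01 ha ⟨hrs, hs.2⟩) with h | h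
  · exact (le_apply hφ hr01).trans h
  · exact (le_const hcM hUM hr01).trans ((hMa φ hφ).trans h)

theorem antitoneOn_Icc_of_anchor : AntitoneOn (Uc p U c) (Icc a 1) := by
  intro r hr s hs hrs
  have hs01 : s ∈ Icc (0:ℝ) 1 := ⟨ha.1.trans hs.1, hs.2⟩
  refine le_of_forall_le ⟨_, admissible_const hcM hUM⟩ fun φ hφ => ?_
  rcases min_le_iff.mp (hφ.1.min_le_of_mem_Icc hpm hp0 ha hs01 ⟨hr.1, hrs⟩) with h | h
  · exact (le_const hcM hUM hs01).trans ((hMa φ hφ).trans h)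
  · exact (le_apply hφ hs01).trans h

theorem eqOn_Icc_of_anchors {b : ℝ} (hb : b ∈ Icc (0:ℝ) 1)
    (hMb : ∀ φ, UcAdmissible p U c φ → M ≤ φ b) {r : ℝ} (hr : r ∈ Icc a b) :
    Uc p U c r = M := by
  refine le_antisymm (le_const hcM hUM ⟨ha.1.trans hr.1, hr.2.trans hb.2⟩) ?_
  refine le_of_forall_le ⟨_, admissible_const hcM hUM⟩ fun φ hφ => ?_
  exact (le_min (hMa φ hφ) (hMb φ hφ)).trans (hφ.1.min_le_of_mem_Icc hpm hp0 ha hb hr)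

end Uc

theorem Uc_monotonicity_structure_general (p U : ℝ → ℝ)
    (hpm : StrictMonoOn p (Set.Icc 0 1))
    (hp0 : p 0 = 0)
    (hU : ContinuousOn U (Set.Icc 0 1))
    (c : ℝ)
    (Ustar lam rho : ℝ)
    (hUstar : Ustar = sSup (U '' Set.Icc (0:ℝ) 1))
    (hlam : lam = sInf {r ∈ Set.Icc (0:ℝ) 1 | U r = Ustar})
    (hrho : rho = sSup {r ∈ Set.Icc (0:ℝ) 1 | U r = Ustar}) :
    (c < Ustar →
      (∀ r ∈ Set.Icc lam rho, Uc p U c r = Ustar) ∧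
      MonotoneOn (Uc p U c) (Set.Icc 0 lam) ∧
      AntitoneOn (Uc p U c) (Set.Icc rho 1)) ∧
    (c = Ustar →
      (∀ r ∈ Set.Icc (0:ℝ) rho, Uc p U c r = Ustar) ∧
      AntitoneOn (Uc p U c) (Set.Icc rho 1)) ∧
    (Ustar < c → AntitoneOn (Uc p U c) (Set.Icc 0 1)) := by
  have hUle : ∀ t ∈ Icc (0:ℝ) 1, U t ≤ Ustar := fun t ht => hUstar ▸
    le_csSup (isCompact_Icc.image_of_continuousOn hU).bddAbove (mem_image_of_mem U ht)
  have hT := isCompact_Icc.isCompact_setOf_eq_sSup_image hU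
  have hTne := isCompact_Icc.nonempty_setOf_eq_sSup_image (nonempty_Icc.mpr zero_le_one) hU
  rw [← hUstar] at hT hTne
  have hlamT : lam ∈ {r ∈ Icc (0:ℝ) 1 | U r = Ustar} := hlam ▸ hT.sInf_mem hTne
  have hrhoT : rho ∈ {r ∈ Icc (0:ℝ) 1 | U r = Ustar} := hrho ▸ hT.sSup_mem hTne
  have hlam_le_rho : lam ≤ rho := hlam ▸ hrho ▸ csInf_le_csSup hTne hT.bddBelow hT.bddAbove
  have hMlam : ∀ φ, UcAdmissible p U c φ → Ustar ≤ φ lam :=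
    fun φ hφ => hlamT.2 ▸ hφ.2.1 lam hlamT.1
  have hMrho : ∀ φ, UcAdmissible p U c φ → Ustar ≤ φ rho :=
    fun φ hφ => hrhoT.2 ▸ hφ.2.1 rho hrhoT.1
  have h01 : (0:ℝ) ∈ Icc (0:ℝ) 1 := ⟨le_rfl, zero_le_one⟩
  have hmono := hpm.monotoneOn
  refine ⟨fun hcU => ⟨?_, ?_, ?_⟩, fun hcU => ⟨?_, ?_⟩, fun hcU => ?_⟩
  · exact fun r => Uc.eqOn_Icc_of_anchors hcU.le hUle hmono hp0 hlamT.1 hMlam hrhoT.1 hMrho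
  · exact Uc.monotoneOn_Icc_of_anchor hcU.le hUle hmono hp0 hlamT.1 hMlam
  · exact Uc.antitoneOn_Icc_of_anchor hcU.le hUle hmono hp0 hrhoT.1 hMrho
  · exact fun r => Uc.eqOn_Icc_of_anchors hcU.le hUle hmono hp0 h01
      (fun φ hφ => hcU ▸ hφ.2.2) hrhoT.1 hMrho
  · exact Uc.antitoneOn_Icc_of_anchor hcU.le hUle hmono hp0 hrhoT.1 hMrho
  · exact Uc.antitoneOn_Icc_of_anchor le_rfl (fun t ht => (hUle t ht).trans hcU.le) hmono hp0
      h01 fun φ hφ => hφ.2.2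

/-- Monotonicity structure of `W = U⁽ᶜ⁾` relative to the maximum `U*` of the reward and
the left-most and right-most locations `λ`, `ϱ` where this maximum is attained. -/
theorem Uc_monotonicity_structure (p U : ℝ → ℝ)
    (hpc : ContinuousOn p (Set.Icc 0 1)) (hpm : StrictMonoOn p (Set.Icc 0 1))
    (hp0 : p 0 = 0)
    (hU : ContinuousOn U (Set.Icc 0 1))
    (c : ℝ) (hc : U 0 ≤ c)
    (Ustar lam rho : ℝ)
    (hUstar : Ustar = sSup (U '' Set.Icc (0:ℝ) 1))
    (hlam : lam = sInf {r ∈ Set.Icc (0:ℝ) 1 | U r = Ustar})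
    (hrho : rho = sSup {r ∈ Set.Icc (0:ℝ) 1 | U r = Ustar}) :
    (c < Ustar →
      (∀ r ∈ Set.Icc lam rho, Uc p U c r = Ustar) ∧
      MonotoneOn (Uc p U c) (Set.Icc 0 lam) ∧
      AntitoneOn (Uc p U c) (Set.Icc rho 1)) ∧
    (c = Ustar →
      (∀ r ∈ Set.Icc (0:ℝ) rho, Uc p U c r = Ustar) ∧
      AntitoneOn (Uc p U c) (Set.Icc rho 1)) ∧
    (Ustar < c → AntitoneOn (Uc p U c) (Set.Icc 0 1)) :=
  Uc_monotonicity_structure_general p U hpm hp0 hU c Ustar lam rho hUstar hlam hrho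
end
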